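/- arXiv:1310.7197 — 2 statements merged into one kernel-verified Lean document; each statement's English description precedes it below -/
import Mathlib

section
/- The weak visibility polygon of a segment in a compact region is closed: if P ⊆ ℝ² is compact, then WVP(pq) is a closed set. -/
/-!
The pairs `(w, x)` with `[w, x] ⊆ P` form a closed set, being an intersection over `t ∈ [0, 1]`
of preimages of `P` under the continuous maps `(w, x) ↦ w + t • (x - w)`. `WVP(pq)` is the
projection of this set along the compact factor `[p, q]`, and such projections are closed.
-/

open Set

theorem isClosed_setOf_exists_mem_of_isCompact {X Y : Type*} [TopologicalSpace X]
    [TopologicalSpace Y] {K : Set X} {S : Set (X × Y)} (hK : IsCompact K) (hS : IsClosed S) :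
    IsClosed {y | ∃ x ∈ K, (x, y) ∈ S} := by
  have : CompactSpace K := isCompact_iff_compactSpace.mp hK
  have hS' : IsClosed {z : K × Y | ((z.1 : X), z.2) ∈ S} := hS.preimage (by fun_prop)
  convert isClosedMap_snd_of_compactSpace _ hS' using 1
  ext y
  simp

theorem isClosed_setOf_segment_subset {E : Type*} [AddCommGroup E] [Module ℝ E]
    [TopologicalSpace E] [IsTopologicalAddGroup E] [ContinuousConstSMul ℝ E] {P : Set E}
    (hP : IsClosed P) : IsClosed {z : E × E | segment ℝ z.1 z.2 ⊆ P} := by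
  have hinter : {z : E × E | segment ℝ z.1 z.2 ⊆ P} =
      ⋂ t ∈ Icc (0 : ℝ) 1, {z | AffineMap.lineMap z.1 z.2 t ∈ P} := by
    ext z
    simp only [mem_ofPred_eq, mem_iInter, segment_eq_image_lineMap, image_subset_iff]
    rfl
  rw [hinter]
  exact isClosed_biInter fun t _ => hP.preimage <|
    (((continuous_snd.sub continuous_fst).const_smul t).add continuous_fst).congr fun z => by
      simp [AffineMap.lineMap_apply]

theorem isCompact_segment {E : Type*} [AddCommGroup E] [Module ℝ E]
    [TopologicalSpace E] [IsTopologicalAddGroup E] [ContinuousSMul ℝ E] (p q : E) :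
    IsCompact (segment ℝ p q) :=
  convexHull_pair (𝕜 := ℝ) p q ▸ (toFinite {p, q}).isCompact_convexHull ℝ

theorem wvp_isClosed_of_compact_general (P : Set (EuclideanSpace ℝ (Fin 2)))
    (hP : IsCompact P) (p q : EuclideanSpace ℝ (Fin 2)) :
    IsClosed {x ∈ P | ∃ w ∈ segment ℝ p q, segment ℝ w x ⊆ P} := by
  have hsep : {x ∈ P | ∃ w ∈ segment ℝ p q, segment ℝ w x ⊆ P} =
      {x | ∃ w ∈ segment ℝ p q, segment ℝ w x ⊆ P} :=
    sep_eq_of_subset fun _ ⟨_, _, hseg⟩ => hseg (right_mem_segment ℝ _ _)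
  rw [hsep]
  exact isClosed_setOf_exists_mem_of_isCompact (isCompact_segment p q)
    (isClosed_setOf_segment_subset hP.isClosed)

theorem wvp_isClosed_of_compact (P : Set (EuclideanSpace ℝ (Fin 2)))
    (hP : IsCompact P) (p q : EuclideanSpace ℝ (Fin 2)) (hp : p ∈ P) (hq : q ∈ P) :
    IsClosed {x ∈ P | ∃ w ∈ segment ℝ p q, segment ℝ w x ⊆ P} :=
  wvp_isClosed_of_compact_general P hP p q
end

section
/- If P is open, the weak visibility polygon WVP(pq) of any segment [p,q] ⊆ P is open. -/
/- Tube lemma: `(x, t) ↦ lineMap w x t` is continuous and `[0, 1]` is compact, so an open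
neighbourhood of `{x} × [0, 1]` in the preimage of `U` contains `N × [0, 1]` for a neighbourhood `N`
of `x`. -/
theorem isOpen_setOf_segment_subset {E : Type*} [AddCommGroup E] [Module ℝ E] [TopologicalSpace E]
    [IsTopologicalAddGroup E] [ContinuousSMul ℝ E] {U : Set E} (hU : IsOpen U) (w : E) :
    IsOpen {x | segment ℝ w x ⊆ U} := by
  refine isOpen_iff_mem_nhds.2 fun x hx => ?_
  simp only [segment_eq_image_lineMap, Set.image_subset_iff] at hx ⊢
  have hcont : Continuous fun z : E × ℝ => AffineMap.lineMap w z.1 z.2 := by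
    simp only [AffineMap.lineMap_apply_module']
    fun_prop
  exact isCompact_Icc.eventually_forall_of_forall_eventually fun t ht =>
    hcont.continuousAt.preimage_mem_nhds (hU.mem_nhds (hx ht))

theorem wvp_isOpen_of_open_general (P : Set (EuclideanSpace ℝ (Fin 2)))
    (hP : IsOpen P) (p q : EuclideanSpace ℝ (Fin 2)) :
    IsOpen {x ∈ P | ∃ w ∈ segment ℝ p q, segment ℝ w x ⊆ P} := by
  have hvisible : IsOpen {x | ∃ w ∈ segment ℝ p q, segment ℝ w x ⊆ P} := by
    convert isOpen_biUnion fun w (_ : w ∈ segment ℝ p q) => isOpen_setOf_segment_subset hP w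
    ext x
    simp only [Set.mem_ofPred_eq, Set.mem_iUnion, exists_prop]
  exact hP.inter hvisible

theorem wvp_isOpen_of_open (P : Set (EuclideanSpace ℝ (Fin 2)))
    (hP : IsOpen P) (p q : EuclideanSpace ℝ (Fin 2))
    (hpq : segment ℝ p q ⊆ P) :
    IsOpen {x ∈ P | ∃ w ∈ segment ℝ p q, segment ℝ w x ⊆ P} :=
  wvp_isOpen_of_open_general P hP p q
end
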